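/- arXiv:1404.4835 — 9 statements merged into one kernel-verified Lean document; each statement's English description precedes it below -/
import Mathlib

section
/- Let G be a finite group with m(G) ≥ 2. Then m(G) = k(G) - 1. -/
/-- `kClasses G` is the number of conjugacy classes of `G`. -/
noncomputable def kClasses (G : Type*) [Group G] : ℕ := Nat.card (ConjClasses G)

/-- `mVal G` is the least positive integer `n` such that the union of any `n` distinct
non-trivial conjugacy classes of `G` together with the identity of `G` is a subgroup of `G`. -/
noncomputable def mVal (G : Type*) [Group G] : ℕ :=
  sInf {n : ℕ | 0 < n ∧ ∀ S : Finset (ConjClasses G),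
    S.card = n → (∀ c ∈ S, c ≠ ConjClasses.mk (1 : G)) →
    ∃ H : Subgroup G, (H : Set G) = insert (1 : G) (⋃ c ∈ S, c.carrier)}

theorem stmt_0 (G : Type*) [Group G] [Finite G] (h : 2 ≤ mVal G) :
    mVal G = kClasses G - 1 := by
  classical
  have _inst : Fintype (ConjClasses G) := Fintype.ofFinite _
  set P : Set ℕ := {n : ℕ | 0 < n ∧ ∀ S : Finset (ConjClasses G),
    S.card = n → (∀ c ∈ S, c ≠ ConjClasses.mk (1 : G)) →
    ∃ H : Subgroup G, (H : Set G) = insert (1 : G) (⋃ c ∈ S, c.carrier)} with hPdef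
  have hm : mVal G = sInf P := rfl
  set k : ℕ := kClasses G with hk
  have hkcard : k = Fintype.card (ConjClasses G) := Nat.card_eq_fintype_card
  -- membership description of the union
  have hmk1 : ∀ x : G, ConjClasses.mk x = ConjClasses.mk (1 : G) ↔ x = 1 := by
    intro x
    rw [ConjClasses.mk_eq_mk_iff_isConj, isConj_one_left]
  have hmem : ∀ (S : Finset (ConjClasses G)) (x : G),
      x ∈ insert (1 : G) (⋃ c ∈ S, ConjClasses.carrier c) ↔
        x = 1 ∨ ConjClasses.mk x ∈ S := by
    intro S x
    simp only [Set.mem_insert_iff, Set.mem_iUnion, ConjClasses.mem_carrier_iff_mk_eq,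
      exists_prop]
    constructor
    · rintro (rfl | ⟨c, hc, rfl⟩)
      · exact Or.inl rfl
      · exact Or.inr hc
    · rintro (rfl | hc)
      · exact Or.inl rfl
      · exact Or.inr ⟨_, hc, rfl⟩
  set T : Finset (ConjClasses G) := Finset.univ.erase (ConjClasses.mk (1 : G)) with hT
  have hTmem : ∀ c, c ∈ T ↔ c ≠ ConjClasses.mk (1 : G) := by
    intro c; simp [hT]
  have hTcard : T.card = k - 1 := by
    rw [hT, Finset.card_erase_of_mem (Finset.mem_univ _), Finset.card_univ, hkcard]
  -- P is nonempty
  have hne : P.Nonempty := by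
    by_contra hc
    rw [Set.not_nonempty_iff_eq_empty] at hc
    rw [hm, hc, Nat.sInf_empty] at h
    omega
  have hmP : sInf P ∈ P := Nat.sInf_mem hne
  have hm2 : 2 ≤ sInf P := by rw [hm] at h; exact h
  -- k ≥ 2
  have hk2 : 2 ≤ k := by
    by_contra hc
    push_neg at hc
    have hsub : ∀ c : ConjClasses G, c = ConjClasses.mk (1 : G) := by
      have : Fintype.card (ConjClasses G) ≤ 1 := by omega
      have hss := Fintype.card_le_one_iff.mp this
      intro c; exact hss c _
    have h1 : 1 ∈ P := by
      refine ⟨one_pos, fun S hcard hnt => ?_⟩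
      obtain ⟨c, hc⟩ := Finset.card_pos.mp (by omega : 0 < S.card)
      exact absurd (hsub c) (hnt c hc)
    have := Nat.sInf_le h1
    omega
  -- k - 1 ∈ P
  have htop : k - 1 ∈ P := by
    refine ⟨by omega, fun S hcard hnt => ?_⟩
    have hsub : S ⊆ T := fun c hc => (hTmem c).mpr (hnt c hc)
    have hST : S = T := Finset.eq_of_subset_of_card_le hsub (by omega)
    refine ⟨⊤, ?_⟩
    ext x
    simp only [Subgroup.coe_top, Set.mem_univ, true_iff]
    rw [hmem]
    by_cases hx : x = 1
    · exact Or.inl hx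
    · exact Or.inr (hST ▸ (hTmem _).mpr (fun hcon => hx ((hmk1 x).mp hcon)))
  have hle : sInf P ≤ k - 1 := Nat.sInf_le htop
  -- sInf P ≥ k - 1
  have hge : k - 1 ≤ sInf P := by
    by_contra hlt
    push_neg at hlt
    set m : ℕ := sInf P with hmdef
    have hstep : m - 1 ∈ P := by
      refine ⟨by omega, fun S hcard hnt => ?_⟩
      have hsub : S ⊆ T := fun c hc => (hTmem c).mpr (hnt c hc)
      have hcard2 : 1 < (T \ S).card := by
        rw [Finset.card_sdiff_of_subset hsub]
        omega
      obtain ⟨c1, hc1, c2, hc2, hc12⟩ := Finset.one_lt_card.mp hcard2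
      have hc1T := (Finset.mem_sdiff.mp hc1).1
      have hc1S := (Finset.mem_sdiff.mp hc1).2
      have hc2T := (Finset.mem_sdiff.mp hc2).1
      have hc2S := (Finset.mem_sdiff.mp hc2).2
      obtain ⟨H1, hH1⟩ := hmP.2 (insert c1 S)
        (by rw [Finset.card_insert_of_notMem hc1S, hcard]; omega)
        (by
          intro c hc
          rcases Finset.mem_insert.mp hc with rfl | hc
          · exact (hTmem c).mp hc1T
          · exact hnt c hc)
      obtain ⟨H2, hH2⟩ := hmP.2 (insert c2 S)
        (by rw [Finset.card_insert_of_notMem hc2S, hcard]; omega)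
        (by
          intro c hc
          rcases Finset.mem_insert.mp hc with rfl | hc
          · exact (hTmem c).mp hc2T
          · exact hnt c hc)
      refine ⟨H1 ⊓ H2, ?_⟩
      ext x
      simp only [Subgroup.coe_inf, Set.mem_inter_iff, SetLike.mem_coe]
      rw [← SetLike.mem_coe, ← SetLike.mem_coe, hH1, hH2, hmem, hmem, hmem]
      constructor
      · rintro ⟨h1 | h1, h2 | h2⟩
        · exact Or.inl h1
        · exact Or.inl h1
        · exact Or.inl h2
        · rcases Finset.mem_insert.mp h1 with he1 | hS1
          · rcases Finset.mem_insert.mp h2 with he2 | hS2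
            · exact absurd (he1 ▸ he2) hc12
            · exact Or.inr hS2
          · exact Or.inr hS1
      · rintro (rfl | hS)
        · exact ⟨Or.inl rfl, Or.inl rfl⟩
        · exact ⟨Or.inr (Finset.mem_insert_of_mem hS),
            Or.inr (Finset.mem_insert_of_mem hS)⟩
    have := Nat.sInf_le hstep
    omega
  rw [hm]
  omega
end

section
/- Let G be a finite abelian group with m(G) ≥ 2. Then m(G) = k(G) - 1. -/
theorem stmt_2 (G : Type*) [CommGroup G] [Finite G] (h : 2 ≤ mVal G) :
    mVal G = kClasses G - 1 := by
  classical
  have hfin : Fintype G := Fintype.ofFinite G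
  have hfinC : Fintype (ConjClasses G) := Fintype.ofFinite _
  set M : Set ℕ := {n : ℕ | 0 < n ∧ ∀ S : Finset (ConjClasses G),
    S.card = n → (∀ c ∈ S, c ≠ ConjClasses.mk (1 : G)) →
    ∃ H : Subgroup G, (H : Set G) = insert (1 : G) (⋃ c ∈ S, c.carrier)} with hM
  have hmval : mVal G = sInf M := rfl
  have hinj : Function.Injective (@ConjClasses.mk G _) := ConjClasses.mk_injective
  have hcarr : ∀ (a x : G), x ∈ (ConjClasses.mk a).carrier ↔ x = a := by
    intro a x
    rw [ConjClasses.mem_carrier_iff_mk_eq]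
    exact ⟨fun h => hinj h, fun h => by rw [h]⟩
  set k : ℕ := kClasses G with hkdef
  have hk : k = Fintype.card (ConjClasses G) := by
    simp [hkdef, kClasses, Nat.card_eq_fintype_card]
  -- 1 ∉ M, extract g with g ≠ 1, g*g ≠ 1
  have h1 : (1 : ℕ) ∉ M := fun hmem => by
    have := Nat.sInf_le hmem
    omega
  have hex : ∃ g : G, g ≠ 1 ∧ g * g ≠ 1 := by
    by_contra hc
    push_neg at hc
    apply h1
    refine ⟨one_pos, fun S hS hnt => ?_⟩
    obtain ⟨c, hc1⟩ := Finset.card_eq_one.mp hS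
    obtain ⟨g, rfl⟩ := ConjClasses.mk_surjective c
    have hg1 : g ≠ 1 := by
      intro hg
      exact hnt (ConjClasses.mk g) (by simp [hc1]) (by rw [hg])
    have hgg : g * g = 1 := hc g hg1
    have hinv : g⁻¹ = g := by rw [inv_eq_iff_mul_eq_one]; exact hgg
    refine ⟨{ carrier := {1, g}
              one_mem' := by simp
              mul_mem' := by
                intro a b ha hb
                simp only [Set.mem_insert_iff, Set.mem_singleton_iff] at ha hb ⊢
                rcases ha with rfl | rfl <;> rcases hb with rfl | rfl <;> simp [hgg]
              inv_mem' := by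
                intro a ha
                simp only [Set.mem_insert_iff, Set.mem_singleton_iff] at ha ⊢
                rcases ha with rfl | rfl <;> simp [hinv] }, ?_⟩
    show ({1, g} : Set G) = insert (1:G) (⋃ c ∈ S, c.carrier)
    ext x
    rw [hc1]
    simp only [Finset.mem_singleton, Set.iUnion_iUnion_eq_left, Set.mem_insert_iff,
      Set.mem_singleton_iff, hcarr g x]
  obtain ⟨g, hg1, hgg⟩ := hex
  have hgne : g⁻¹ ≠ g := by
    intro he
    apply hgg
    calc g * g = g⁻¹ * g := by rw [he]
    _ = 1 := inv_mul_cancel g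
  have hgi1 : g⁻¹ ≠ (1 : G) := by simp [hg1]
  -- k ≥ 3
  have hk3 : 3 ≤ k := by
    have h3 : ({ConjClasses.mk (1:G), ConjClasses.mk g, ConjClasses.mk g⁻¹} :
        Finset (ConjClasses G)).card = 3 := by
      rw [Finset.card_insert_of_notMem, Finset.card_insert_of_notMem, Finset.card_singleton]
      · simp only [Finset.mem_singleton]
        exact fun he => hgne ((hinj he).symm)
      · simp only [Finset.mem_insert, Finset.mem_singleton]
        push_neg
        exact ⟨fun he => hg1 (hinj he).symm, fun he => hgi1 (hinj he).symm⟩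
    calc 3 = _ := h3.symm
    _ ≤ Fintype.card (ConjClasses G) := Finset.card_le_card (Finset.subset_univ _)
    _ = k := hk.symm
  -- k - 1 ∈ M
  have hkM : k - 1 ∈ M := by
    refine ⟨by omega, fun S hS hnt => ?_⟩
    have hsub : S ⊆ Finset.univ.erase (ConjClasses.mk (1 : G)) := fun c hc =>
      Finset.mem_erase.mpr ⟨hnt c hc, Finset.mem_univ c⟩
    have hcard : (Finset.univ.erase (ConjClasses.mk (1 : G))).card = k - 1 := by
      rw [Finset.card_erase_of_mem (Finset.mem_univ _), Finset.card_univ, hk]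
    have hSeq : S = Finset.univ.erase (ConjClasses.mk (1 : G)) :=
      Finset.eq_of_subset_of_card_le hsub (by omega)
    refine ⟨⊤, ?_⟩
    ext x
    simp only [Subgroup.coe_top, Set.mem_univ, true_iff, Set.mem_insert_iff, Set.mem_iUnion]
    by_cases hx : x = 1
    · exact Or.inl hx
    · refine Or.inr ⟨ConjClasses.mk x, ?_, ConjClasses.mem_carrier_mk⟩
      rw [hSeq]
      exact Finset.mem_erase.mpr ⟨fun he => hx (hinj he), Finset.mem_univ _⟩
  have hMne : M.Nonempty := ⟨k - 1, hkM⟩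
  have hle : sInf M ≤ k - 1 := Nat.sInf_le hkM
  have hmem : sInf M ∈ M := Nat.sInf_mem hMne
  -- lower bound
  have hge : k - 1 ≤ sInf M := by
    by_contra hcon
    push_neg at hcon
    set n := sInf M with hn
    have hn2 : 2 ≤ n := h
    -- build the bad S
    set A : Finset (ConjClasses G) :=
      ((Finset.univ.erase (ConjClasses.mk (1 : G))).erase (ConjClasses.mk g)).erase
        (ConjClasses.mk g⁻¹) with hA
    have hAcard : A.card = k - 3 := by
      rw [hA, Finset.card_erase_of_mem, Finset.card_erase_of_mem, Finset.card_erase_of_mem,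
        Finset.card_univ, ← hk]
      · omega
      · exact Finset.mem_univ _
      · exact Finset.mem_erase.mpr ⟨fun he => hg1 (hinj he), Finset.mem_univ _⟩
      · refine Finset.mem_erase.mpr ⟨fun he => hgne (hinj he), ?_⟩
        exact Finset.mem_erase.mpr ⟨fun he => hgi1 (hinj he), Finset.mem_univ _⟩
    obtain ⟨T, hTsub, hTcard⟩ := Finset.exists_subset_card_eq (s := A) (n := n - 1) (by omega)
    have hgT : ConjClasses.mk g ∉ T := fun hmem => by
      have := hTsub hmem
      rw [hA] at this
      exact (Finset.mem_erase.mp (Finset.mem_erase.mp this).2).1 rfl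
    set S : Finset (ConjClasses G) := insert (ConjClasses.mk g) T with hSdef
    have hScard : S.card = n := by
      rw [hSdef, Finset.card_insert_of_notMem hgT, hTcard]
      omega
    have hSnt : ∀ c ∈ S, c ≠ ConjClasses.mk (1 : G) := by
      intro c hc
      rcases Finset.mem_insert.mp hc with rfl | hc
      · exact fun he => hg1 (hinj he)
      · have := hTsub hc
        rw [hA] at this
        exact (Finset.mem_erase.mp (Finset.mem_erase.mp (Finset.mem_erase.mp this).2).2).1
    obtain ⟨H, hH⟩ := hmem.2 S hScard hSnt
    have hgH : g ∈ H := by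
      have : g ∈ (H : Set G) := by
        rw [hH]
        exact Set.mem_insert_iff.mpr (Or.inr (Set.mem_iUnion₂.mpr
          ⟨ConjClasses.mk g, Finset.mem_insert_self _ _, ConjClasses.mem_carrier_mk⟩))
      exact this
    have hgiH : g⁻¹ ∈ (H : Set G) := H.inv_mem hgH
    rw [hH] at hgiH
    rcases Set.mem_insert_iff.mp hgiH with he | hmem'
    · exact hgi1 he
    · obtain ⟨c, hcS, hcmem⟩ := Set.mem_iUnion₂.mp hmem'
      have hcmk : ConjClasses.mk g⁻¹ = c := ConjClasses.mem_carrier_iff_mk_eq.mp hcmem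
      rcases Finset.mem_insert.mp hcS with rfl | hcT
      · exact hgne (hinj hcmk)
      · rw [← hcmk] at hcT
        have := hTsub hcT
        rw [hA] at this
        exact (Finset.mem_erase.mp this).1 rfl
  rw [hmval]
  omega
end

section
/- Let G be a finite non-abelian group with m(G) < k(G) - 1. Then for any two distinct non-trivial conjugacy classes C₁ and C₂ of G, there exists a subgroup of G containing C₁ but not containing C₂. -/
private theorem stmt_3' (G : Type*) [Group G] [Finite G]
    (hna : ¬ ∀ a b : G, a * b = b * a)
    (h : (sInf {n : ℕ | 0 < n ∧ ∀ S : Finset (ConjClasses G),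
    S.card = n → (∀ c ∈ S, c ≠ ConjClasses.mk (1 : G)) →
    ∃ H : Subgroup G, (H : Set G) = insert (1 : G) (⋃ c ∈ S, c.carrier)})
      < Nat.card (ConjClasses G) - 1) :
    ∀ C₁ C₂ : ConjClasses G, C₁ ≠ C₂ →
      C₁ ≠ ConjClasses.mk (1 : G) → C₂ ≠ ConjClasses.mk (1 : G) →
      ∃ H : Subgroup G, C₁.carrier ⊆ (H : Set G) ∧ ¬ C₂.carrier ⊆ (H : Set G) := by
  classical
  intro C₁ C₂ hne h1 h2
  have _inst : Fintype (ConjClasses G) := Fintype.ofFinite _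
  set k := Nat.card (ConjClasses G) with hk
  have hkcard : k = Fintype.card (ConjClasses G) := Nat.card_eq_fintype_card
  -- key fact: mk g = mk 1 ↔ g = 1
  have hmk1 : ∀ g : G, ConjClasses.mk g = ConjClasses.mk (1 : G) ↔ g = 1 := by
    intro g
    rw [ConjClasses.mk_eq_mk_iff_isConj, isConj_comm, isConj_one_right]
  set M := {n : ℕ | 0 < n ∧ ∀ S : Finset (ConjClasses G),
    S.card = n → (∀ c ∈ S, c ≠ ConjClasses.mk (1 : G)) →
    ∃ H : Subgroup G, (H : Set G) = insert (1 : G) (⋃ c ∈ S, c.carrier)} with hM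
  -- nonempty: k - 1 ∈ M
  have hk2 : 2 ≤ k := by
    rw [hkcard]
    have : C₁ ≠ ConjClasses.mk 1 := h1
    exact Fintype.one_lt_card_iff.mpr ⟨C₁, ConjClasses.mk 1, h1⟩
  have hmem : k - 1 ∈ M := by
    constructor
    · omega
    · intro S hScard hSne
      have hSeq : S = Finset.univ.erase (ConjClasses.mk (1 : G)) := by
        apply Finset.eq_of_subset_of_card_le
        · intro c hc
          exact Finset.mem_erase.mpr ⟨hSne c hc, Finset.mem_univ c⟩
        · rw [Finset.card_erase_of_mem (Finset.mem_univ _), hScard, Finset.card_univ, ← hkcard]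
      refine ⟨⊤, ?_⟩
      ext g
      simp only [Subgroup.coe_top, Set.mem_univ, true_iff, Set.mem_insert_iff,
        Set.mem_iUnion]
      by_cases hg : g = 1
      · left; exact hg
      · right
        refine ⟨ConjClasses.mk g, ?_, ?_⟩
        · rw [hSeq]
          exact Finset.mem_erase.mpr ⟨fun hc => hg ((hmk1 g).mp hc), Finset.mem_univ _⟩
        · exact ConjClasses.mem_carrier_iff_mk_eq.mpr rfl
  have hMne : M.Nonempty := ⟨k - 1, hmem⟩
  have hmM : sInf M ∈ M := Nat.sInf_mem hMne
  set m := sInf M with hm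
  have hmpos : 0 < m := hmM.1
  have hmle : m ≤ k - 2 := by omega
  -- build S
  set A := ((Finset.univ.erase (ConjClasses.mk (1 : G))).erase C₂).erase C₁ with hA
  have hAcard : A.card = k - 3 := by
    rw [hA, Finset.card_erase_of_mem, Finset.card_erase_of_mem, Finset.card_erase_of_mem
      (Finset.mem_univ _), Finset.card_univ, ← hkcard]
    · omega
    · exact Finset.mem_erase.mpr ⟨h2, Finset.mem_univ _⟩
    · exact Finset.mem_erase.mpr ⟨hne, Finset.mem_erase.mpr ⟨h1, Finset.mem_univ _⟩⟩
  obtain ⟨T, hTA, hTcard⟩ := Finset.exists_subset_card_eq (s := A) (n := m - 1) (by omega)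
  set S := insert C₁ T with hS
  have hC₁T : C₁ ∉ T := fun hc => (Finset.mem_erase.mp (hTA hc)).1 rfl
  have hScard : S.card = m := by
    rw [hS, Finset.card_insert_of_notMem hC₁T, hTcard]; omega
  have hC₂S : C₂ ∉ S := by
    rw [hS]
    simp only [Finset.mem_insert]
    rintro (rfl | hc)
    · exact hne rfl
    · exact (Finset.mem_erase.mp (Finset.mem_erase.mp (hTA hc)).2).1 rfl
  have hSne : ∀ c ∈ S, c ≠ ConjClasses.mk (1 : G) := by
    intro c hc
    rcases Finset.mem_insert.mp hc with rfl | hc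
    · exact h1
    · exact (Finset.mem_erase.mp (Finset.mem_erase.mp (Finset.mem_erase.mp (hTA hc)).2).2).1
  obtain ⟨H, hH⟩ := hmM.2 S hScard hSne
  refine ⟨H, ?_, ?_⟩
  · intro g hg
    rw [hH]
    right
    exact Set.mem_iUnion₂.mpr ⟨C₁, by simp [hS], hg⟩
  · intro hsub
    obtain ⟨g, rfl⟩ := ConjClasses.exists_rep C₂
    have hg : g ∈ (ConjClasses.mk g).carrier := ConjClasses.mem_carrier_iff_mk_eq.mpr rfl
    have := hsub hg
    rw [hH] at this
    rcases this with rfl | hgm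
    · exact h2 rfl
    · obtain ⟨c, hcS, hgc⟩ := Set.mem_iUnion₂.mp hgm
      rw [ConjClasses.mem_carrier_iff_mk_eq] at hgc
      exact hC₂S (hgc ▸ hcS)

theorem stmt_3 (G : Type*) [Group G] [Finite G]
    (hna : ¬ ∀ a b : G, a * b = b * a) (h : mVal G < kClasses G - 1) :
    ∀ C₁ C₂ : ConjClasses G, C₁ ≠ C₂ →
      C₁ ≠ ConjClasses.mk (1 : G) → C₂ ≠ ConjClasses.mk (1 : G) →
      ∃ H : Subgroup G, C₁.carrier ⊆ (H : Set G) ∧ ¬ C₂.carrier ⊆ (H : Set G) := by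
  exact stmt_3' G hna (by unfold mVal kClasses at h; exact h)
end

section
/- Let G be a finite non-abelian group with m(G) < k(G) - 1. Then every element of G is conjugate to each of its non-trivial powers; that is, for every x in G and every integer j such that x^j ≠ 1, the element x^j is conjugate to x in G. -/
/-!
Suppose `x ^ j ≠ 1` is not conjugate to `x`. Since `m(G) ≤ k(G) - 2`, one can choose `m(G)`
non-trivial classes that contain the class of `x` but not that of `x ^ j`. Their union with `1`
is a subgroup containing `x`, hence `x ^ j`: a contradiction. The minimum `m(G)` exists because
`k(G) - 1` qualifies: all non-trivial classes together with `1` make up `G`.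
-/

theorem Finset.exists_subset_card_eq_of_mem_of_notMem {α : Type*} [DecidableEq α]
    {A : Finset α} {a b : α} (ha : a ∈ A) (hb : b ∈ A) (hab : a ≠ b) {n : ℕ} (hn : 0 < n)
    (hnA : n < A.card) : ∃ S ⊆ A, a ∈ S ∧ b ∉ S ∧ S.card = n := by
  have hsub : {a} ⊆ A.erase b := by simp [ha, hab]
  have hcard : n ≤ (A.erase b).card := by rw [Finset.card_erase_of_mem hb]; omega
  obtain ⟨S, haS, hSA, hS⟩ :=
    Finset.exists_subsuperset_card_eq hsub (by rwa [Finset.card_singleton]) hcard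
  exact ⟨S, hSA.trans (A.erase_subset b), haS (Finset.mem_singleton_self a),
    fun hbS => Finset.notMem_erase b A (hSA hbS), hS⟩

namespace ConjClasses

variable {G : Type*} [Group G]

def UnionsAreSubgroups (G : Type*) [Group G] (n : ℕ) : Prop :=
  ∀ S : Finset (ConjClasses G), S.card = n → (∀ c ∈ S, c ≠ ConjClasses.mk (1 : G)) →
    ∃ H : Subgroup G, (H : Set G) = insert (1 : G) (⋃ c ∈ S, c.carrier)

theorem mk_eq_mk_one_iff {g : G} : ConjClasses.mk g = ConjClasses.mk 1 ↔ g = 1 := by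
  rw [mk_eq_mk_iff_isConj, isConj_one_left]

theorem mem_iff_mk_mem_of_coe_eq {S : Finset (ConjClasses G)} {H : Subgroup G}
    (hH : (H : Set G) = insert 1 (⋃ c ∈ S, c.carrier)) {g : G} (hg : g ≠ 1) :
    g ∈ H ↔ ConjClasses.mk g ∈ S := by
  rw [← SetLike.mem_coe, hH]
  simp [hg, mem_carrier_iff_mk_eq]

def nontrivials (G : Type*) [Group G] [Fintype (ConjClasses G)] [DecidableEq (ConjClasses G)] :
    Finset (ConjClasses G) :=
  Finset.univ.erase (ConjClasses.mk 1)

section Nontrivials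

variable [Fintype (ConjClasses G)] [DecidableEq (ConjClasses G)]

theorem mem_nontrivials {c : ConjClasses G} : c ∈ nontrivials G ↔ c ≠ ConjClasses.mk 1 := by
  simp [nontrivials]

theorem mk_mem_nontrivials {g : G} : ConjClasses.mk g ∈ nontrivials G ↔ g ≠ 1 :=
  mem_nontrivials.trans mk_eq_mk_one_iff.not

theorem card_nontrivials : (nontrivials G).card = Fintype.card (ConjClasses G) - 1 := by
  rw [nontrivials, Finset.card_erase_of_mem (Finset.mem_univ _), Finset.card_univ]

end Nontrivials

variable [Fintype (ConjClasses G)]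

theorem unionsAreSubgroups_card_sub_one :
    UnionsAreSubgroups G (Fintype.card (ConjClasses G) - 1) := by
  classical
  intro S hcard hS
  have hS_eq : S = nontrivials G :=
    Finset.eq_of_subset_of_card_le (fun c hc => mem_nontrivials.2 (hS c hc))
      (card_nontrivials.trans hcard.symm).le
  refine ⟨⊤, Set.eq_of_subset_of_subset (fun g _ => ?_) (Set.subset_univ _)⟩
  by_cases hg : g = 1
  · exact Or.inl hg
  · exact Or.inr (Set.mem_biUnion (hS_eq ▸ mk_mem_nontrivials.2 hg) mem_carrier_mk)

theorem isConj_zpow_of_unionsAreSubgroups {n : ℕ} (hn : 0 < n)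
    (hnk : n + 2 ≤ Fintype.card (ConjClasses G)) (hU : UnionsAreSubgroups G n) {x : G} {j : ℤ}
    (hxj : x ^ j ≠ 1) : IsConj x (x ^ j) := by
  classical
  by_contra hconj
  have hx : x ≠ 1 := by rintro rfl; simp at hxj
  obtain ⟨S, hS_sub, hxS, hxjS, hS⟩ := Finset.exists_subset_card_eq_of_mem_of_notMem
    (mk_mem_nontrivials.2 hx) (mk_mem_nontrivials.2 hxj) (mt mk_eq_mk_iff_isConj.1 hconj) hn
    (by rw [card_nontrivials]; omega)
  obtain ⟨H, hH⟩ := hU S hS fun c hc => mem_nontrivials.1 (hS_sub hc)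
  have hxH : x ∈ H := (mem_iff_mk_mem_of_coe_eq hH hx).2 hxS
  exact hxjS ((mem_iff_mk_mem_of_coe_eq hH hxj).1 (H.zpow_mem hxH j))

end ConjClasses

section MVal

open ConjClasses

variable {G : Type*} [Group G]

theorem mVal_eq_sInf : mVal G = sInf {n | 0 < n ∧ UnionsAreSubgroups G n} := rfl

theorem mVal_pos_and_unionsAreSubgroups [Fintype (ConjClasses G)]
    (hk : 2 ≤ Fintype.card (ConjClasses G)) : 0 < mVal G ∧ UnionsAreSubgroups G (mVal G) := by
  have hne : {n | 0 < n ∧ UnionsAreSubgroups G n}.Nonempty :=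
    ⟨_, by omega, unionsAreSubgroups_card_sub_one⟩
  exact mVal_eq_sInf (G := G) ▸ Nat.sInf_mem hne

end MVal

theorem stmt_4_general (G : Type*) [Group G]
    (h : mVal G < kClasses G - 1) :
    ∀ (x : G) (j : ℤ), x ^ j ≠ 1 → IsConj x (x ^ j) := by
  intro x j hxj
  have hk : 2 ≤ Nat.card (ConjClasses G) := by unfold kClasses at h; omega
  have := (Nat.finite_of_card_ne_zero (by omega) : Finite (ConjClasses G))
  have := Fintype.ofFinite (ConjClasses G)
  rw [kClasses, Nat.card_eq_fintype_card] at h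
  obtain ⟨hpos, hU⟩ := mVal_pos_and_unionsAreSubgroups (G := G) (by omega)
  exact ConjClasses.isConj_zpow_of_unionsAreSubgroups hpos (by omega) hU hxj

theorem stmt_4 (G : Type*) [Group G] [Finite G]
    (hna : ¬ ∀ a b : G, a * b = b * a) (h : mVal G < kClasses G - 1) :
    ∀ (x : G) (j : ℤ), x ^ j ≠ 1 → IsConj x (x ^ j) :=
  stmt_4_general G h
end

section
/- Let G be a finite non-abelian group with m(G) < k(G) - 1. Then every non-identity element of G has prime order. -/
/-!
If `x` has order `N`, neither `1` nor prime, and `p` is the least prime factor of `N`, then `x ^ p`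
is non-trivial and of order `N / p < N`, so it is not conjugate to `x`. When `m(G) ≤ k(G) - 2`
we may choose `m(G)` non-trivial classes containing that of `x` and avoiding that of `x ^ p`;
the union of these classes with `1` is a subgroup, which contains `x` but not `x ^ p`.
-/

lemma IsConj.orderOf_eq {G : Type*} [Group G] {a b : G} (h : IsConj a b) :
    orderOf a = orderOf b := by
  obtain ⟨c, hc⟩ := h
  exact hc.orderOf_eq _

lemma exists_pow_ne_one_not_isConj {G : Type*} [Group G] [Finite G] {x : G} (hx : x ≠ 1)
    (hx_prime : ¬ (orderOf x).Prime) : ∃ d : ℕ, x ^ d ≠ 1 ∧ ¬ IsConj x (x ^ d) := by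
  set p := (orderOf x).minFac
  have hp : p.Prime := Nat.minFac_prime (mt orderOf_eq_one_iff.mp hx)
  have hpN : p ∣ orderOf x := Nat.minFac_dvd _
  have hpow : orderOf (x ^ p) = orderOf x / p := by
    rw [orderOf_pow, Nat.gcd_eq_right hpN]
  have hN : 0 < orderOf x := orderOf_pos x
  refine ⟨p, fun h1 => hx_prime ?_, fun hconj => ?_⟩
  · rw [← orderOf_eq_one_iff, hpow] at h1
    rwa [← Nat.div_mul_cancel hpN, h1, one_mul]
  · have hlt : orderOf x / p < orderOf x := Nat.div_lt_self hN hp.one_lt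
    exact hlt.ne (by rw [← hpow, ← hconj.orderOf_eq])

lemma ConjClasses.mk_ne_mk_one {G : Type*} [Group G] {g : G} (hg : g ≠ 1) :
    ConjClasses.mk g ≠ ConjClasses.mk 1 := by
  simpa [ConjClasses.mk_eq_mk_iff_isConj] using hg

lemma insert_one_iUnion_carrier_eq_univ {G : Type*} [Group G] {S : Set (ConjClasses G)}
    (hS : ∀ c, c ≠ ConjClasses.mk 1 → c ∈ S) :
    insert (1 : G) (⋃ c ∈ S, c.carrier) = Set.univ := by
  refine Set.eq_univ_of_forall fun g => ?_
  rcases eq_or_ne g 1 with rfl | hg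
  · exact Set.mem_insert _ _
  · exact Set.mem_insert_of_mem _ (Set.mem_biUnion (hS _ (ConjClasses.mk_ne_mk_one hg))
      ConjClasses.mem_carrier_mk)

/-- `k(G) - 1` lies in the set defining `mVal G`, so `mVal G` is not the junk value `sInf ∅ = 0`. -/
lemma mVal_spec {G : Type*} [Group G] (hk : 0 < kClasses G - 1) :
    0 < mVal G ∧ ∀ S : Finset (ConjClasses G),
      S.card = mVal G → (∀ c ∈ S, c ≠ ConjClasses.mk (1 : G)) →
      ∃ H : Subgroup G, (H : Set G) = insert (1 : G) (⋃ c ∈ S, c.carrier) := by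
  classical
  have : Finite (ConjClasses G) := Nat.finite_of_card_ne_zero (by unfold kClasses at hk; omega)
  have : Fintype (ConjClasses G) := Fintype.ofFinite _
  refine (Nat.sInf_mem ⟨kClasses G - 1, hk, fun S hS_card hS_one => ⟨⊤, ?_⟩⟩ : mVal G ∈ _)
  have hS : S = Finset.univ.erase (ConjClasses.mk 1) := by
    refine Finset.eq_of_subset_of_card_le (fun c hc => Finset.mem_erase.mpr
      ⟨hS_one c hc, Finset.mem_univ c⟩) ?_
    rw [Finset.card_erase_of_mem (Finset.mem_univ _), Finset.card_univ, hS_card, kClasses,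
      Nat.card_eq_fintype_card]
  rw [Subgroup.coe_top, eq_comm]
  refine insert_one_iUnion_carrier_eq_univ fun c hc => ?_
  simp [hS, hc]

lemma pow_mem_of_coe_eq_insert_one_iUnion {G : Type*} [Group G] {S : Set (ConjClasses G)}
    {H : Subgroup G} (hH : (H : Set G) = insert (1 : G) (⋃ c ∈ S, c.carrier))
    {x : G} (hx : ConjClasses.mk x ∈ S) (n : ℕ) : x ^ n = 1 ∨ ConjClasses.mk (x ^ n) ∈ S := by
  have hxH : x ∈ (H : Set G) := hH ▸ Set.mem_insert_of_mem _
    (Set.mem_biUnion hx ConjClasses.mem_carrier_mk)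
  have hxnH : x ^ n ∈ (H : Set G) := H.pow_mem hxH n
  rw [hH, Set.mem_insert_iff, Set.mem_iUnion₂] at hxnH
  refine hxnH.imp_right fun ⟨c, hc, hxc⟩ => ?_
  rwa [ConjClasses.mem_carrier_iff_mk_eq.mp hxc]

lemma Finset.exists_mem_notMem_card_eq {α : Type*} [Fintype α] [DecidableEq α]
    {a b c : α} (hab : a ≠ b) (hac : a ≠ c) {n : ℕ} (hn : 0 < n)
    (hn_card : n ≤ Fintype.card α - 2) :
    ∃ S : Finset α, a ∈ S ∧ b ∉ S ∧ c ∉ S ∧ S.card = n := by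
  have haT : a ∈ (Finset.univ.erase b).erase c := by simp [hab, hac]
  have hT_card : Fintype.card α - 2 ≤ ((Finset.univ.erase b).erase c).card := by
    have h₁ := Finset.pred_card_le_card_erase (s := Finset.univ.erase b) (a := c)
    have h₂ := Finset.pred_card_le_card_erase (s := (Finset.univ : Finset α)) (a := b)
    rw [Finset.card_univ] at h₂
    omega
  obtain ⟨S, haS, hST, hS_card⟩ := Finset.exists_subsuperset_card_eq
    (Finset.singleton_subset_iff.mpr haT) (by rwa [Finset.card_singleton])
    (hn_card.trans hT_card)
  refine ⟨S, Finset.singleton_subset_iff.mp haS, fun hb => ?_, fun hc => ?_, hS_card⟩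
  · simpa using hST hb
  · simpa using hST hc

theorem stmt_5_general (G : Type*) [Group G] [Finite G]
    (h : mVal G < kClasses G - 1) :
    ∀ x : G, x ≠ 1 → (orderOf x).Prime := by
  classical
  have : Fintype (ConjClasses G) := Fintype.ofFinite _
  intro x hx
  by_contra hx_prime
  obtain ⟨d, hd_one, hd_conj⟩ := exists_pow_ne_one_not_isConj hx hx_prime
  obtain ⟨hm_pos, hm⟩ := mVal_spec (G := G) (by omega)
  obtain ⟨S, hxS, h1S, hdS, hS_card⟩ := Finset.exists_mem_notMem_card_eq
    (ConjClasses.mk_ne_mk_one hx)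
    (mt ConjClasses.mk_eq_mk_iff_isConj.mp hd_conj) hm_pos
    (by rw [kClasses, Nat.card_eq_fintype_card] at h; omega)
  obtain ⟨H, hH⟩ := hm S hS_card fun c hc hc1 => h1S (hc1 ▸ hc)
  exact (pow_mem_of_coe_eq_insert_one_iUnion (S := (S : Set (ConjClasses G))) (by simpa using hH)
    (Finset.mem_coe.mpr hxS) d).elim hd_one hdS

theorem stmt_5 (G : Type*) [Group G] [Finite G]
    (hna : ¬ ∀ a b : G, a * b = b * a) (h : mVal G < kClasses G - 1) :
    ∀ x : G, x ≠ 1 → (orderOf x).Prime :=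
  stmt_5_general G h
end

section
/- Let G be a finite non-abelian group with m(G) < k(G) - 1. Then the order of G is even. -/
lemma aux_odd_no_real {G : Type*} [Group G] [Finite G] (hodd : Odd (Nat.card G))
    {x : G} (hx : x ≠ 1) : ConjClasses.mk x ≠ ConjClasses.mk x⁻¹ := by
  intro hc
  rw [ConjClasses.mk_eq_mk_iff_isConj, isConj_iff] at hc
  obtain ⟨g, hg⟩ := hc
  have h2 : g * x⁻¹ * g⁻¹ = x := by
    have := congrArg (·⁻¹) hg
    simpa [mul_inv_rev, mul_assoc] using this
  have hcomm : (g ^ 2) * x * (g ^ 2)⁻¹ = x := by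
    have e1 : (g ^ 2) * x * (g ^ 2)⁻¹ = g * (g * x * g⁻¹) * g⁻¹ := by
      rw [sq, mul_inv_rev]; simp [mul_assoc]
    rw [e1, hg, h2]
  have hcomm2 : Commute (g ^ 2) x := by
    have := mul_inv_eq_iff_eq_mul.mp hcomm
    exact this
  have hog : Odd (orderOf g) := Odd.of_dvd_nat hodd (orderOf_dvd_natCard g)
  obtain ⟨k, hk⟩ := hog
  have hgp : (g ^ 2) ^ (k + 1) = g := by
    rw [← pow_mul]
    have : 2 * (k + 1) = orderOf g + 1 := by omega
    rw [this, pow_succ, pow_orderOf_eq_one, one_mul]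
  have hcg : Commute g x := by
    have := hcomm2.pow_left (k + 1)
    rwa [hgp] at this
  have hxx : x = x⁻¹ := by
    rw [← hg, hcg.eq, mul_assoc, mul_inv_cancel, mul_one]
  have hx2 : x ^ 2 = 1 := by
    nth_rewrite 1 [pow_two]; nth_rewrite 2 [hxx]; exact mul_inv_cancel x
  have hdvd2 : orderOf x ∣ 2 := orderOf_dvd_of_pow_eq_one hx2
  have hdvdc : orderOf x ∣ Nat.card G := orderOf_dvd_natCard x
  have hcop : Nat.Coprime 2 (Nat.card G) := by
    exact Nat.coprime_two_left.mpr hodd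
  have : orderOf x = 1 := Nat.eq_one_of_dvd_coprimes hcop hdvd2 hdvdc
  exact hx (orderOf_eq_one_iff.mp this)

theorem stmt_6 (G : Type*) [Group G] [Finite G]
    (hna : ¬ ∀ a b : G, a * b = b * a) (h : mVal G < kClasses G - 1) :
    Even (Nat.card G) := by
  classical
  rcases Nat.even_or_odd (Nat.card G) with he | hodd
  · exact he
  exfalso
  have : Fintype (ConjClasses G) := Fintype.ofFinite _
  have hk : kClasses G = Fintype.card (ConjClasses G) := Nat.card_eq_fintype_card
  set k := kClasses G with hkdef
  -- the defining set
  set P : Set ℕ := {n : ℕ | 0 < n ∧ ∀ S : Finset (ConjClasses G),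
    S.card = n → (∀ c ∈ S, c ≠ ConjClasses.mk (1 : G)) →
    ∃ H : Subgroup G, (H : Set G) = insert (1 : G) (⋃ c ∈ S, c.carrier)} with hP
  have hmval : mVal G = sInf P := rfl
  have hUcard : (Finset.univ.erase (ConjClasses.mk (1 : G))).card = k - 1 := by
    rw [Finset.card_erase_of_mem (Finset.mem_univ _), Finset.card_univ, hk]
  have hmem1 : ∀ {y : G}, y ≠ 1 → ConjClasses.mk y ≠ ConjClasses.mk (1 : G) := by
    intro y hy hc
    rw [ConjClasses.mk_eq_mk_iff_isConj] at hc
    exact hy (isConj_one_right.mp hc.symm)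
  have htop : (k - 1) ∈ P := by
    refine ⟨by omega, ?_⟩
    intro S hScard hSnt
    refine ⟨⊤, ?_⟩
    have hSU : S = Finset.univ.erase (ConjClasses.mk (1 : G)) := by
      apply Finset.eq_of_subset_of_card_le
      · intro c hc
        exact Finset.mem_erase.mpr ⟨hSnt c hc, Finset.mem_univ _⟩
      · rw [hUcard, hScard]
    ext y
    simp only [Subgroup.coe_top, Set.mem_univ, true_iff, Set.mem_insert_iff]
    by_cases hy : y = 1
    · exact Or.inl hy
    · refine Or.inr ?_
      refine Set.mem_iUnion₂.mpr ⟨ConjClasses.mk y, ?_, ConjClasses.mem_carrier_mk⟩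
      rw [hSU]
      exact Finset.mem_erase.mpr ⟨hmem1 hy, Finset.mem_univ _⟩
  have hPne : P.Nonempty := ⟨k - 1, htop⟩
  have hm : mVal G ∈ P := by rw [hmval]; exact Nat.sInf_mem hPne
  set m := mVal G with hmdef
  obtain ⟨hmpos, hmprop⟩ := hm
  -- find a noncommuting pair, hence a nontrivial element
  push_neg at hna
  obtain ⟨a, b, hab⟩ := hna
  have hx : a ≠ 1 := by rintro rfl; simp at hab
  set C := ConjClasses.mk a with hC
  set C' := ConjClasses.mk a⁻¹ with hC'
  have hCC' : C ≠ C' := aux_odd_no_real hodd hx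
  have hC1 : C ≠ ConjClasses.mk (1 : G) := hmem1 hx
  have hC'1 : C' ≠ ConjClasses.mk (1 : G) := hmem1 (inv_ne_one.mpr hx)
  -- pool of candidate classes
  set pool : Finset (ConjClasses G) :=
    ((Finset.univ.erase (ConjClasses.mk (1 : G))).erase C').erase C with hpool
  have hCmem : C ∈ (Finset.univ.erase (ConjClasses.mk (1 : G))).erase C' :=
    Finset.mem_erase.mpr ⟨hCC', Finset.mem_erase.mpr ⟨hC1, Finset.mem_univ _⟩⟩
  have hC'mem : C' ∈ Finset.univ.erase (ConjClasses.mk (1 : G)) :=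
    Finset.mem_erase.mpr ⟨hC'1, Finset.mem_univ _⟩
  have hpoolcard : pool.card = k - 3 := by
    rw [hpool, Finset.card_erase_of_mem hCmem, Finset.card_erase_of_mem hC'mem, hUcard]
    omega
  have hle : m - 1 ≤ pool.card := by rw [hpoolcard]; omega
  obtain ⟨T, hTsub, hTcard⟩ := Finset.exists_subset_card_eq hle
  have hCT : C ∉ T := fun hcT => (Finset.mem_erase.mp (hTsub hcT)).1 rfl
  set S := insert C T with hS
  have hScard : S.card = m := by
    rw [hS, Finset.card_insert_of_notMem hCT, hTcard]; omega
  have hSnt : ∀ c ∈ S, c ≠ ConjClasses.mk (1 : G) := by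
    intro c hc
    rcases Finset.mem_insert.mp hc with rfl | hcT
    · exact hC1
    · exact (Finset.mem_erase.mp (Finset.mem_erase.mp (Finset.mem_erase.mp (hTsub hcT)).2).2).1
  obtain ⟨H, hH⟩ := hmprop S hScard hSnt
  have hxH : a ∈ H := by
    have : a ∈ (H : Set G) := by
      rw [hH]
      exact Set.mem_insert_iff.mpr (Or.inr (Set.mem_iUnion₂.mpr
        ⟨C, Finset.mem_insert_self _ _, ConjClasses.mem_carrier_mk⟩))
    exact this
  have hxinvH : a⁻¹ ∈ (H : Set G) := H.inv_mem hxH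
  rw [hH] at hxinvH
  rcases Set.mem_insert_iff.mp hxinvH with h1 | h2
  · exact hx (inv_eq_one.mp h1)
  · obtain ⟨c, hcS, hcmem⟩ := Set.mem_iUnion₂.mp h2
    have : C' = c := ConjClasses.mem_carrier_iff_mk_eq.mp hcmem
    subst this
    rcases Finset.mem_insert.mp hcS with h3 | h4
    · exact hCC' h3.symm
    · exact (Finset.mem_erase.mp (Finset.mem_erase.mp (hTsub h4)).2).1 rfl
end

section
/- For each positive integer k, there are only finitely many finite groups, up to isomorphism, having exactly k conjugacy classes. -/
private lemma egyptian_bound : ∀ (k : ℕ) (q : ℚ), 0 < q → ∃ N : ℕ,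
    ∀ s : Multiset ℕ, Multiset.card s = k → (∀ a ∈ s, 0 < a) →
      (s.map (fun a : ℕ => (1:ℚ)/(a:ℚ))).sum = q → ∀ a ∈ s, a ≤ N := by
  intro k
  induction k with
  | zero =>
    intro q hq
    refine ⟨0, fun s hc _ _ a ha => ?_⟩
    rw [Multiset.card_eq_zero] at hc
    simp [hc] at ha
  | succ k ih =>
    intro q hq
    set M : ℕ := ⌈((k+1 : ℕ) : ℚ)/q⌉₊ with hM
    classical
    set g : ℕ → ℕ := fun a =>
      if h : 0 < q - 1/(a:ℚ) then (ih (q - 1/(a:ℚ)) h).choose else 0 with hg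
    refine ⟨M + (Finset.Icc 1 M).sup g, ?_⟩
    intro s hc hpos hsum a ha
    have hne : s ≠ 0 := by
      intro h; rw [h] at hc; simp at hc
    have hfne : s.toFinset.Nonempty := by
      simpa [Multiset.toFinset_nonempty] using hne
    set m := s.toFinset.min' hfne with hmdef
    have hm_mem : m ∈ s := Multiset.mem_toFinset.mp (s.toFinset.min'_mem hfne)
    have hmin : ∀ b ∈ s, m ≤ b := fun b hb =>
      s.toFinset.min'_le b (Multiset.mem_toFinset.mpr hb)
    have hmpos : 0 < m := hpos m hm_mem
    have hle : q ≤ ((k+1 : ℕ) : ℚ) * (1/(m:ℚ)) := by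
      have : (s.map (fun a : ℕ => (1:ℚ)/(a:ℚ))).sum ≤
          (Multiset.card (s.map (fun a : ℕ => (1:ℚ)/(a:ℚ)))) • ((1:ℚ)/(m:ℚ)) := by
        apply Multiset.sum_le_card_nsmul
        intro x hx
        obtain ⟨b, hb, rfl⟩ := Multiset.mem_map.mp hx
        have hbpos : 0 < b := hpos b hb
        apply one_div_le_one_div_of_le
        · exact_mod_cast hmpos
        · exact_mod_cast hmin b hb
      rw [hsum, Multiset.card_map, hc] at this
      calc q ≤ (k+1 : ℕ) • ((1:ℚ)/(m:ℚ)) := this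
        _ = ((k+1 : ℕ) : ℚ) * (1/(m:ℚ)) := by rw [nsmul_eq_mul]
    have hmM : m ≤ M := by
      have h1 : (m : ℚ) ≤ ((k+1 : ℕ) : ℚ)/q := by
        rw [le_div_iff₀ hq]
        have hm0 : (0:ℚ) < (m:ℚ) := by exact_mod_cast hmpos
        calc (m:ℚ) * q ≤ (m:ℚ) * (((k+1 : ℕ) : ℚ) * (1/(m:ℚ))) :=
              mul_le_mul_of_nonneg_left hle (le_of_lt hm0)
          _ = ((k+1 : ℕ) : ℚ) := by field_simp
      have h2 := h1.trans (Nat.le_ceil _)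
      rw [hM]
      exact_mod_cast h2
    rcases eq_or_ne a m with rfl | ham
    · exact le_trans hmM (Nat.le_add_right _ _)
    · have ha' : a ∈ s.erase m := (Multiset.mem_erase_of_ne ham).mpr ha
      set t := s.erase m with ht
      have hst : s = m ::ₘ t := (Multiset.cons_erase hm_mem).symm
      have htc : Multiset.card t = k := by
        have := congrArg Multiset.card hst
        simp at this; omega
      have hsum_t : (t.map (fun a : ℕ => (1:ℚ)/(a:ℚ))).sum = q - 1/(m:ℚ) := by
        have h3 : (s.map (fun a : ℕ => (1:ℚ)/(a:ℚ))).sum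
            = 1/(m:ℚ) + (t.map (fun a : ℕ => (1:ℚ)/(a:ℚ))).sum := by
          rw [hst]; simp
        rw [hsum] at h3; linarith
      have htpos : ∀ b ∈ t, 0 < b := fun b hb => hpos b (hst ▸ Multiset.mem_cons_of_mem hb)
      have hq' : 0 < q - 1/(m:ℚ) := by
        rw [← hsum_t]
        have hne' : t ≠ 0 := by
          intro h; rw [h] at ha'; simp at ha'
        obtain ⟨b, hb⟩ := Multiset.exists_mem_of_ne_zero hne'
        have hmem' : (1:ℚ)/(b:ℚ) ∈ t.map (fun a : ℕ => (1:ℚ)/(a:ℚ)) :=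
          Multiset.mem_map_of_mem _ hb
        have hbpos : 0 < b := htpos b hb
        have h1b : 0 < (1:ℚ)/(b:ℚ) := by positivity
        calc (0:ℚ) < (1:ℚ)/(b:ℚ) := h1b
          _ ≤ _ := Multiset.single_le_sum (fun x hx => by
              obtain ⟨c, hcmem, rfl⟩ := Multiset.mem_map.mp hx
              have := htpos c hcmem
              positivity) _ hmem'
      have hspec := (ih (q - 1/(m:ℚ)) hq').choose_spec t htc htpos hsum_t a ha'
      have hgm : g m = (ih (q - 1/(m:ℚ)) hq').choose := by
        rw [hg]; exact dif_pos hq'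
      have hmem : m ∈ Finset.Icc 1 M := Finset.mem_Icc.mpr ⟨hmpos, hmM⟩
      calc a ≤ g m := by rw [hgm]; exact hspec
        _ ≤ (Finset.Icc 1 M).sup g := Finset.le_sup hmem
        _ ≤ M + (Finset.Icc 1 M).sup g := Nat.le_add_left _ _

private lemma card_conjclass_dvd {G : Type} [Group G] [Finite G] (c : ConjClasses G) :
    Nat.card c.carrier ∣ Nat.card G ∧ 0 < Nat.card c.carrier := by
  classical
  cases nonempty_fintype G
  obtain ⟨g, rfl⟩ := c.exists_rep
  have horb := MulAction.card_orbit_mul_card_stabilizer_eq_card_group (ConjAct G) g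
  have hcar : (ConjClasses.mk g).carrier = MulAction.orbit (ConjAct G) g := by
    rw [ConjAct.orbit_eq_carrier_conjClasses]
  have hcast : Fintype.card G = Fintype.card (ConjAct G) :=
    Fintype.card_congr ConjAct.toConjAct.toEquiv
  constructor
  · rw [Nat.card_eq_fintype_card (α := G), hcast, ← horb]
    have h5 : Nat.card (ConjClasses.mk g).carrier
        = Fintype.card (MulAction.orbit (ConjAct G) g) := by
      rw [hcar, Nat.card_eq_fintype_card]
    rw [h5]
    exact Dvd.intro _ rfl
  · have hne : (ConjClasses.mk g).carrier.Nonempty := ⟨g, ConjClasses.mem_carrier_mk⟩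
    have hfin : (ConjClasses.mk g).carrier.Finite := Set.toFinite _
    rw [Nat.card_pos_iff]
    exact ⟨hne.to_subtype, hfin.to_subtype⟩

private lemma card_bound {G : Type} [Group G] [Finite G] {k N : ℕ}
    (hN : ∀ s : Multiset ℕ, Multiset.card s = k → (∀ a ∈ s, 0 < a) →
      (s.map (fun a : ℕ => (1:ℚ)/(a:ℚ))).sum = 1 → ∀ a ∈ s, a ≤ N)
    (hkG : Nat.card (ConjClasses G) = k) : Nat.card G ≤ N := by
  classical
  cases nonempty_fintype G
  have hGpos : 0 < Nat.card G := Nat.card_pos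
  set s : Multiset ℕ := (Finset.univ : Finset (ConjClasses G)).val.map
    (fun c => Nat.card G / Nat.card c.carrier) with hs
  have hcard : Multiset.card s = k := by
    rw [hs, Multiset.card_map]
    simpa [Nat.card_eq_fintype_card] using hkG
  have hpos : ∀ a ∈ s, 0 < a := by
    intro a ha
    obtain ⟨c, _, rfl⟩ := Multiset.mem_map.mp ha
    obtain ⟨hdvd, hposc⟩ := card_conjclass_dvd c
    exact Nat.div_pos (Nat.le_of_dvd hGpos hdvd) hposc
  have hsum : (s.map (fun a : ℕ => (1:ℚ)/(a:ℚ))).sum = 1 := by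
    rw [hs, Multiset.map_map]
    have hterm : ∀ c : ConjClasses G,
        (1:ℚ)/(((Nat.card G / Nat.card c.carrier : ℕ)) : ℚ)
          = (Nat.card c.carrier : ℚ)/(Nat.card G : ℚ) := by
      intro c
      obtain ⟨hdvd, hposc⟩ := card_conjclass_dvd c
      rw [Nat.cast_div hdvd (by exact_mod_cast hposc.ne')]
      rw [one_div_div]
    have heq : ((Finset.univ : Finset (ConjClasses G)).val.map
        (fun c => (1:ℚ)/(((Nat.card G / Nat.card c.carrier : ℕ)) : ℚ))).sum
        = ∑ c : ConjClasses G, (Nat.card c.carrier : ℚ)/(Nat.card G : ℚ) := by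
      rw [Finset.sum]
      congr 1
      exact Multiset.map_congr rfl (fun c _ => hterm c)
    rw [Function.comp_def, heq, ← Finset.sum_div]
    rw [div_eq_one_iff_eq (by exact_mod_cast hGpos.ne')]
    have hclass : ∑ c : ConjClasses G, Nat.card c.carrier = Nat.card G := by
      have h6 := Group.sum_card_conj_classes_eq_card G
      rw [finsum_eq_sum_of_fintype] at h6
      rw [← h6]
      apply Finset.sum_congr rfl
      intro c _
      rw [Nat.card_coe_set_eq]
    rw [← hclass]
    push_cast
    rfl
  have hmem : Nat.card G ∈ s := by
    rw [hs, Multiset.mem_map]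
    refine ⟨ConjClasses.mk 1, Finset.mem_univ _, ?_⟩
    have h1 : (ConjClasses.mk (1:G)).carrier = {1} := by
      ext a
      simp [ConjClasses.mem_carrier_iff_mk_eq, ConjClasses.mk_eq_mk_iff_isConj,
        isConj_iff_eq, eq_comm]
    rw [h1]
    simp
  exact hN s hcard hpos hsum _ hmem

theorem stmt_13 (k : ℕ) (hk : 0 < k) :
    ∃ (n : ℕ) (S : Finset (Subgroup (Equiv.Perm (Fin n)))),
      ∀ (G : Type) [Group G] [Finite G],
        Nat.card (ConjClasses G) = k → ∃ H ∈ S, Nonempty (G ≃* H) := by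
  classical
  obtain ⟨N, hN⟩ := egyptian_bound k 1 one_pos
  have hfin : Finite (Subgroup (Equiv.Perm (Fin N))) :=
    Finite.of_injective _ SetLike.coe_injective
  refine ⟨N, @Finset.univ _ (Fintype.ofFinite _), ?_⟩
  intro G _ _ hkG
  have hle : Nat.card G ≤ N := card_bound hN hkG
  let e1 : G ≃ Fin (Nat.card G) := Finite.equivFin G
  let emb : G ↪ Fin N := e1.toEmbedding.trans (Fin.castLEEmb hle)
  let f : G →* Equiv.Perm (Fin N) :=
    (Equiv.Perm.viaEmbeddingHom emb).comp (MulAction.toPermHom G G)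
  have hf : Function.Injective f :=
    (Equiv.Perm.viaEmbeddingHom_injective emb).comp MulAction.toPerm_injective
  exact ⟨f.range, @Finset.mem_univ _ (Fintype.ofFinite _) _, ⟨MonoidHom.ofInjective hf⟩⟩
end

section
/- Let G be a finite group. Then m(G) = 1 if and only if G is an elementary abelian 2-group (i.e., every non-identity element of G has order 2). -/
lemma isConj_orderOf_eq {G : Type*} [Group G] {x y : G} (h : IsConj x y) :
    orderOf x = orderOf y := by
  obtain ⟨c, hc⟩ := h
  exact SemiconjBy.orderOf_eq _ hc

theorem stmt_14 (G : Type*) [Group G] [Finite G] :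
    mVal G = 1 ↔ ∀ x : G, x ≠ 1 → orderOf x = 2 := by
  constructor
  · intro hm
    -- extract the n = 1 property
    have hmem : (1 : ℕ) ∈ {n : ℕ | 0 < n ∧ ∀ S : Finset (ConjClasses G),
        S.card = n → (∀ c ∈ S, c ≠ ConjClasses.mk (1 : G)) →
        ∃ H : Subgroup G, (H : Set G) = insert (1 : G) (⋃ c ∈ S, c.carrier)} := by
      have hne : {n : ℕ | 0 < n ∧ ∀ S : Finset (ConjClasses G),
          S.card = n → (∀ c ∈ S, c ≠ ConjClasses.mk (1 : G)) →
          ∃ H : Subgroup G, (H : Set G) = insert (1 : G) (⋃ c ∈ S, c.carrier)}.Nonempty := by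
        by_contra h
        rw [Set.not_nonempty_iff_eq_empty] at h
        simp only [mVal, h, Nat.sInf_empty] at hm
        exact absurd hm zero_ne_one
      have := Nat.sInf_mem hne
      rwa [show sInf _ = 1 from hm] at this
    have key : ∀ x : G, x ≠ 1 → ∃ H : Subgroup G,
        (H : Set G) = insert (1 : G) ((ConjClasses.mk x).carrier) := by
      intro x hx
      obtain ⟨H, hH⟩ := hmem.2 {ConjClasses.mk x} (Finset.card_singleton _)
        (by
          intro c hc
          rw [Finset.mem_singleton] at hc
          subst hc
          rw [Ne, ConjClasses.mk_eq_mk_iff_isConj, isConj_comm, isConj_one_right]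
          exact hx)
      refine ⟨H, ?_⟩
      rw [hH]
      simp
    -- membership description
    have hmemH : ∀ x : G, x ≠ 1 → ∀ H : Subgroup G,
        (H : Set G) = insert (1 : G) ((ConjClasses.mk x).carrier) →
        ∀ y : G, y ∈ H → y = 1 ∨ IsConj x y := by
      intro x hx H hH y hy
      have : y ∈ (H : Set G) := hy
      rw [hH, Set.mem_insert_iff] at this
      rcases this with h1 | h2
      · exact Or.inl h1
      · right
        rw [ConjClasses.mem_carrier_iff_mk_eq, ConjClasses.mk_eq_mk_iff_isConj] at h2
        exact h2.symm
    -- every nontrivial element has prime order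
    have hprime : ∀ x : G, x ≠ 1 → (orderOf x).Prime := by
      intro x hx
      obtain ⟨H, hH⟩ := key x hx
      have hxH : x ∈ H := by
        rw [← SetLike.mem_coe, hH]
        exact Set.mem_insert_iff.mpr (Or.inr ConjClasses.mem_carrier_mk)
      have hpos : 1 < orderOf x := by
        have h1 := orderOf_pos x
        have h2 : orderOf x ≠ 1 := fun h => hx (orderOf_eq_one_iff.mp h)
        omega
      obtain ⟨p, hp, hpd⟩ := (orderOf x).exists_prime_and_dvd (by omega)
      have hy : orderOf (x ^ (orderOf x / p)) = p :=
        orderOf_pow_orderOf_div (by omega) hpd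
      have hyne : x ^ (orderOf x / p) ≠ 1 := by
        intro h
        rw [h, orderOf_one] at hy
        exact hp.one_lt.ne' hy.symm
      have hyH : x ^ (orderOf x / p) ∈ H := pow_mem hxH _
      rcases hmemH x hx H hH _ hyH with h1 | h2
      · exact absurd h1 hyne
      · rw [isConj_orderOf_eq h2, hy]
        exact hp
    -- all nontrivial elements have the same order
    have hsame : ∀ x y : G, x ≠ 1 → y ≠ 1 → orderOf x = orderOf y := by
      intro x y hx hy
      by_contra hne
      obtain ⟨H, hH⟩ := key x hx
      obtain ⟨K, hK⟩ := key y hy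
      have hHn : H.Normal := by
        constructor
        intro h hh g
        rcases hmemH x hx H hH h hh with h1 | h2
        · subst h1
          simpa using H.one_mem
        · have : IsConj x (g * h * g⁻¹) := h2.trans (isConj_iff.mpr ⟨g, rfl⟩)
          rw [← SetLike.mem_coe, hH]
          right
          rw [ConjClasses.mem_carrier_iff_mk_eq, ConjClasses.mk_eq_mk_iff_isConj]
          exact this.symm
      have hKn : K.Normal := by
        constructor
        intro h hh g
        rcases hmemH y hy K hK h hh with h1 | h2
        · subst h1
          simpa using K.one_mem
        · have : IsConj y (g * h * g⁻¹) := h2.trans (isConj_iff.mpr ⟨g, rfl⟩)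
          rw [← SetLike.mem_coe, hK]
          right
          rw [ConjClasses.mem_carrier_iff_mk_eq, ConjClasses.mk_eq_mk_iff_isConj]
          exact this.symm
      have hdisj : Disjoint H K := by
        rw [Subgroup.disjoint_def]
        intro z hzH hzK
        by_contra hz
        rcases hmemH x hx H hH z hzH with h1 | h2
        · exact hz h1
        rcases hmemH y hy K hK z hzK with h3 | h4
        · exact hz h3
        exact hne ((isConj_orderOf_eq h2).trans (isConj_orderOf_eq h4).symm)
      have hxK : x ∈ H := by
        rw [← SetLike.mem_coe, hH]
        exact Or.inr ConjClasses.mem_carrier_mk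
      have hyK : y ∈ K := by
        rw [← SetLike.mem_coe, hK]
        exact Or.inr ConjClasses.mem_carrier_mk
      have hcomm : Commute x y :=
        Subgroup.commute_of_normal_of_disjoint H K hHn hKn hdisj x y hxK hyK
      have hcop : Nat.Coprime (orderOf x) (orderOf y) :=
        (Nat.coprime_primes (hprime x hx) (hprime y hy)).mpr hne
      have horder : orderOf (x * y) = orderOf x * orderOf y :=
        hcomm.orderOf_mul_eq_mul_orderOf_of_coprime hcop
      have hxy : x * y ≠ 1 := by
        intro h
        rw [orderOf_eq_one_iff.mpr h] at horder
        have h1 := (hprime x hx).one_lt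
        have h2 := (hprime y hy).one_lt
        nlinarith
      have := hprime (x * y) hxy
      rw [horder] at this
      exact Nat.not_prime_mul (hprime x hx).one_lt.ne' (hprime y hy).one_lt.ne' this
    -- conclude
    intro x hx
    have hp : (orderOf x).Prime := hprime x hx
    -- G is a p-group
    have hpg : IsPGroup (orderOf x) G := by
      intro g
      refine ⟨1, ?_⟩
      rcases eq_or_ne g 1 with rfl | hg
      · simp
      · rw [pow_one, hsame x g hx hg]
        exact pow_orderOf_eq_one g
    have : Nontrivial G := ⟨x, 1, hx⟩
    haveI : Fact (orderOf x).Prime := ⟨hp⟩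
    have hz := hpg.center_nontrivial
    obtain ⟨z, hz1⟩ := exists_ne (1 : Subgroup.center G)
    have hzc : (z : G) ∈ Subgroup.center G := z.2
    have hzne : (z : G) ≠ 1 := by
      intro h
      exact hz1 (Subtype.ext h)
    -- conjugacy class of z is {z}
    obtain ⟨H, hH⟩ := key (z : G) hzne
    have hz2 : (z : G) * (z : G) ∈ H := by
      apply mul_mem <;>
        · rw [← SetLike.mem_coe, hH]
          exact Or.inr ConjClasses.mem_carrier_mk
    rcases hmemH (z : G) hzne H hH _ hz2 with h1 | h2
    · -- z^2 = 1 so orderOf z = 2, hence p = 2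
      have : orderOf (z : G) = 2 := orderOf_eq_prime (by rw [pow_two]; exact h1) hzne
      rw [hsame x (z : G) hx hzne, this]
    · -- z conjugate to z^2, but z is central so z^2 = z, so z = 1
      exfalso
      obtain ⟨c, hc⟩ := isConj_iff.mp h2
      have hcen := (Subgroup.mem_center_iff.mp hzc) c
      have heq : (z : G) * (z : G) = (z : G) := by
        rw [← hc, hcen, mul_assoc, mul_inv_cancel, mul_one]
      have : (z : G) = 1 := by
        have := mul_right_cancel (heq.trans (one_mul (z : G)).symm)
        exact this
      exact hzne this
  · intro h
    -- reverse direction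
    have hsub : (1 : ℕ) ∈ {n : ℕ | 0 < n ∧ ∀ S : Finset (ConjClasses G),
        S.card = n → (∀ c ∈ S, c ≠ ConjClasses.mk (1 : G)) →
        ∃ H : Subgroup G, (H : Set G) = insert (1 : G) (⋃ c ∈ S, c.carrier)} := by
      refine ⟨one_pos, ?_⟩
      intro S hS hS1
      obtain ⟨c, hc⟩ := Finset.card_eq_one.mp hS
      subst hc
      obtain ⟨x, rfl⟩ := c.exists_rep
      have hx : x ≠ 1 := by
        intro hx1
        exact hS1 _ (Finset.mem_singleton_self _) (by rw [hx1])
      -- G has exponent 2, so abelian; class of x is {x}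
      have hcomm : ∀ a b : G, a * b = b * a := by
        intro a b
        have sq : ∀ g : G, g * g = 1 := by
          intro g
          rcases eq_or_ne g 1 with rfl | hg
          · simp
          · have := h g hg
            rw [← pow_two, ← this, pow_orderOf_eq_one]
        have h1 := sq (a * b)
        have h2 := sq a
        have h3 := sq b
        calc a * b = a * ((a*b)*(a*b)) * b := by rw [h1]; group
          _ = (a*a) * (b * a) * (b * b) := by group
          _ = b * a := by rw [h2, h3]; group
      have hcar : (ConjClasses.mk x).carrier = {x} := by
        ext y
        rw [ConjClasses.mem_carrier_iff_mk_eq, ConjClasses.mk_eq_mk_iff_isConj]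
        constructor
        · intro hc
          obtain ⟨c, hc⟩ := isConj_iff.mp hc
          simp only [Set.mem_singleton_iff]
          rw [← hc, hcomm c y, mul_assoc, mul_inv_cancel, mul_one]
        · rintro rfl
          exact IsConj.refl _
      refine ⟨Subgroup.zpowers x, ?_⟩
      simp only [Finset.mem_singleton, Set.iUnion_iUnion_eq_left, hcar]
      ext y
      simp only [SetLike.mem_coe, Subgroup.mem_zpowers_iff, Set.mem_insert_iff,
        Set.mem_singleton_iff]
      constructor
      · rintro ⟨k, rfl⟩
        have hx2 : orderOf x = 2 := h x hx
        have : x ^ k = x ^ (k % 2) := by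
          have h2 : x ^ (2 : ℤ) = 1 := by
            rw [show (2 : ℤ) = ((2 : ℕ) : ℤ) from rfl, zpow_natCast, ← hx2,
              pow_orderOf_eq_one]
          conv_lhs => rw [← Int.emod_add_mul_ediv k 2]
          rw [zpow_add, zpow_mul, h2, one_zpow, mul_one]
        rw [this]
        have : k % 2 = 0 ∨ k % 2 = 1 := Int.emod_two_eq_zero_or_one k
        rcases this with h0 | h1
        · left; rw [h0, zpow_zero]
        · right; rw [h1, zpow_one]
      · rintro (rfl | rfl)
        · exact ⟨0, by simp⟩
        · exact ⟨1, by simp⟩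
    rw [mVal]
    have hle := Nat.sInf_le hsub
    have hne : ({n : ℕ | 0 < n ∧ ∀ S : Finset (ConjClasses G),
        S.card = n → (∀ c ∈ S, c ≠ ConjClasses.mk (1 : G)) →
        ∃ H : Subgroup G, (H : Set G) = insert (1 : G) (⋃ c ∈ S, c.carrier)}).Nonempty := ⟨1, hsub⟩
    have := (Nat.sInf_mem hne).1
    omega
end

section
/- Let N be a finite group admitting a fixed-point-free automorphism φ of order 2. Then N is abelian and φ(x) = x⁻¹ for all x in N. -/
theorem stmt_18 (N : Type*) [Group N] [Finite N] (φ : N ≃* N)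
    (horder : ∀ x : N, φ (φ x) = x) (hne : φ ≠ MulEquiv.refl N)
    (hfpf : ∀ x : N, φ x = x → x = 1) :
    (∀ a b : N, a * b = b * a) ∧ ∀ x : N, φ x = x⁻¹ := by
  have hinj : Function.Injective (fun x : N => x⁻¹ * φ x) := by
    intro x y h
    simp only at h
    have hx : φ x = x * y⁻¹ * φ y := by rw [mul_assoc, ← h]; group
    have h1 : φ (y * x⁻¹) = y * x⁻¹ := by
      rw [map_mul, map_inv, hx]; group
    have h2 := hfpf _ h1
    have : y = x := by
      have := mul_eq_one_iff_eq_inv.mp h2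
      simpa using this
    exact this.symm
  have hsurj := Finite.surjective_of_injective hinj
  have hinv : ∀ g : N, φ g = g⁻¹ := by
    intro g
    obtain ⟨x, hx⟩ := hsurj g
    simp only at hx
    rw [← hx, map_mul, map_inv, horder]
    group
  refine ⟨fun a b => ?_, hinv⟩
  have h1 : φ (a * b) = (a * b)⁻¹ := hinv _
  rw [map_mul, hinv, hinv, mul_inv_rev] at h1
  have := congrArg (·⁻¹) h1
  simpa [mul_inv_rev] using this.symm
end
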